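/- (Proposition 3) Fix I ∈ ℕ, q > 0, η > 0, L > 0, δ > 0, and if q ≠ 1 assume there is 𝔤 > 0 with 1 − 2|1−q|η^{-1}L ≥ 𝔤. Let N_t, N_x ∈ ℕ, Δt, Δx = 1/N_x > 0, and suppose the data satisfy 0 ≤ U_{i,k,l} ≤ L for all i ∈ {1,…,I}, k ∈ {0,…,N_t−1}, l ∈ {1,…,N_x}. If Δt ≤ 1/(1+δ), then the values Φ^{(i)}_{k,l} produced by the backward finite difference scheme satisfy 0 ≤ Φ^{(i)}_{k,l} ≤ L for all i ∈ {1,…,I}, k ∈ {0,1,…,N_t}, and l ∈ {1,…,N_x}. -/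

import Mathlib

open Real

noncomputable section

/-- Tsallis deformed exponential `exp_q`. -/
noncomputable def texp (q z : ℝ) : ℝ :=
  if q = 1 then Real.exp z else (max (1 + (1 - q) * z) 0) ^ ((1:ℝ) / (1 - q))

/-- Tsallis deformed logarithm `ln_q`. -/
noncomputable def tlog (q y : ℝ) : ℝ :=
  if q = 1 then Real.log y else (y ^ (1 - q) - 1) / (1 - q)

/-! The scheme stays in `[0, L]` because one step is a convex combination, with weights
`1 - Δt(1+δ)`, `Δt δ` and `Δt`, of `Φ_{k+1,l}`, `U_{k,l}` and
`Φ_{k+1,l} + η ln_q(Σ_m exp_q(η⁻¹(Φ_{k+1,m} - Φ_{k+1,l})) Δx)`, and the last term lies in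
`[0, L]`: `ln_q ∘ (averaging) ∘ exp_q` is a quasi-arithmetic mean, hence lies between the
smallest and the largest argument. The assumption `2|1-q| L < η` keeps all arguments where
`exp_q` is positive, so that `ln_q` inverts it there. -/

def texpDomain (q : ℝ) : Set ℝ := {z | q ≠ 1 → 0 < 1 + (1 - q) * z}

lemma ordConnected_texpDomain (q : ℝ) : (texpDomain q).OrdConnected := by
  refine ⟨fun a ha b hb z ⟨haz, hzb⟩ hq => ?_⟩
  have ha := ha hq
  have hb := hb hq
  rcases le_total 0 (1 - q) with h | h <;> nlinarith

lemma mem_texpDomain_of_abs_lt {q z : ℝ} (h : |(1 - q) * z| < 1) : z ∈ texpDomain q :=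
  fun _ => by linarith [neg_abs_le ((1 - q) * z)]

lemma texp_of_mem_texpDomain {q z : ℝ} (hq : q ≠ 1) (hz : z ∈ texpDomain q) :
    texp q z = (1 + (1 - q) * z) ^ ((1:ℝ) / (1 - q)) := by
  simp [texp, hq, max_eq_left (hz hq).le]

lemma texp_pos {q z : ℝ} (hz : z ∈ texpDomain q) : 0 < texp q z := by
  by_cases hq : q = 1
  · simp [texp, hq, Real.exp_pos]
  · rw [texp_of_mem_texpDomain hq hz]
    exact Real.rpow_pos_of_pos (hz hq) _

lemma tlog_texp {q z : ℝ} (hz : z ∈ texpDomain q) : tlog q (texp q z) = z := by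
  by_cases hq : q = 1
  · simp [texp, tlog, hq]
  · have hq' : (1 : ℝ) - q ≠ 0 := sub_ne_zero.2 (Ne.symm hq)
    rw [texp_of_mem_texpDomain hq hz, tlog, if_neg hq, ← Real.rpow_mul (hz hq).le,
      one_div, inv_mul_cancel₀ hq', Real.rpow_one]
    field_simp
    ring

lemma texp_monotoneOn (q : ℝ) : MonotoneOn (texp q) (texpDomain q) := by
  intro z₁ h₁ z₂ h₂ hz
  by_cases hq : q = 1
  · simpa [texp, hq] using hz
  · rw [texp_of_mem_texpDomain hq h₁, texp_of_mem_texpDomain hq h₂]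
    rcases lt_or_gt_of_ne (sub_ne_zero.2 (Ne.symm hq)) with hq' | hq'
    · exact Real.rpow_le_rpow_of_nonpos (h₂ hq) (by nlinarith)
        (div_nonpos_of_nonneg_of_nonpos zero_le_one hq'.le)
    · exact Real.rpow_le_rpow (h₁ hq).le (by nlinarith) (by positivity)

lemma tlog_monotoneOn (q : ℝ) : MonotoneOn (tlog q) (Set.Ioi 0) := by
  intro y₁ (h₁ : 0 < y₁) y₂ _ hy
  by_cases hq : q = 1
  · simpa [tlog, hq] using Real.log_le_log h₁ hy
  · simp only [tlog, if_neg hq]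
    rcases lt_or_gt_of_ne (sub_ne_zero.2 (Ne.symm hq)) with hq' | hq'
    · exact div_le_div_of_nonpos_of_le hq'.le
        (by linarith [Real.rpow_le_rpow_of_nonpos h₁ hy hq'.le])
    · exact div_le_div_of_nonneg_right
        (by linarith [Real.rpow_le_rpow h₁.le hy hq'.le]) hq'.le

lemma tlog_sum_texp_mul_mem_Icc {ι : Type*} {q a b : ℝ} (s : Finset ι) (w z : ι → ℝ)
    (ha : a ∈ texpDomain q) (hb : b ∈ texpDomain q) (hw : ∀ i ∈ s, 0 ≤ w i)
    (hw₁ : ∑ i ∈ s, w i = 1) (hz : ∀ i ∈ s, z i ∈ Set.Icc a b) :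
    tlog q (∑ i ∈ s, texp q (z i) * w i) ∈ Set.Icc a b := by
  have hz' : ∀ i ∈ s, z i ∈ texpDomain q := fun i hi =>
    (ordConnected_texpDomain q).out ha hb (hz i hi)
  have average_const (c : ℝ) : c = ∑ i ∈ s, c * w i := by rw [← Finset.mul_sum, hw₁, mul_one]
  have hlow : texp q a ≤ ∑ i ∈ s, texp q (z i) * w i := by
    rw [average_const (texp q a)]
    exact Finset.sum_le_sum fun i hi => mul_le_mul_of_nonneg_right
      (texp_monotoneOn q ha (hz' i hi) (hz i hi).1) (hw i hi)
  have hhigh : ∑ i ∈ s, texp q (z i) * w i ≤ texp q b := by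
    rw [average_const (texp q b)]
    exact Finset.sum_le_sum fun i hi => mul_le_mul_of_nonneg_right
      (texp_monotoneOn q (hz' i hi) hb (hz i hi).2) (hw i hi)
  have hpos : 0 < ∑ i ∈ s, texp q (z i) * w i := (texp_pos ha).trans_le hlow
  constructor
  · calc a = tlog q (texp q a) := (tlog_texp ha).symm
      _ ≤ _ := tlog_monotoneOn q (texp_pos ha) hpos hlow
  · calc _ ≤ tlog q (texp q b) := tlog_monotoneOn q hpos (texp_pos hb) hhigh
      _ = b := tlog_texp hb

lemma mul_tlog_sum_texp_mem_Icc {ι : Type*} [Fintype ι] {q η L : ℝ} (hη : 0 < η)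
    (hqL : |1 - q| * (η⁻¹ * L) < 1) (w φ : ι → ℝ) (hw : ∀ m, 0 ≤ w m) (hw₁ : ∑ m, w m = 1)
    (hφ : ∀ m, φ m ∈ Set.Icc 0 L) (l : ι) :
    η * tlog q (∑ m, texp q (η⁻¹ * (φ m - φ l)) * w m) ∈ Set.Icc (-φ l) (L - φ l) := by
  have hη' : 0 ≤ η⁻¹ := inv_nonneg.2 hη.le
  have hdomain {z : ℝ} (hz : |z| ≤ L) : η⁻¹ * z ∈ texpDomain q := by
    refine mem_texpDomain_of_abs_lt (lt_of_le_of_lt ?_ hqL)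
    rw [abs_mul, abs_mul, abs_of_nonneg hη']
    gcongr
  obtain ⟨hl₀, hlL⟩ := hφ l
  have hIcc := tlog_sum_texp_mul_mem_Icc (q := q) (a := η⁻¹ * -φ l) (b := η⁻¹ * (L - φ l))
    Finset.univ w (fun m => η⁻¹ * (φ m - φ l))
    (hdomain (abs_le.2 ⟨by linarith, by linarith⟩))
    (hdomain (abs_le.2 ⟨by linarith, by linarith⟩))
    (fun m _ => hw m) hw₁
    (fun m _ => ⟨mul_le_mul_of_nonneg_left (by linarith [(hφ m).1]) hη',
      mul_le_mul_of_nonneg_left (by linarith [(hφ m).2]) hη'⟩)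
  have hcancel (z : ℝ) : η * (η⁻¹ * z) = z := mul_inv_cancel_left₀ hη.ne' z
  constructor
  · simpa only [hcancel] using mul_le_mul_of_nonneg_left hIcc.1 hη.le
  · simpa only [hcancel] using mul_le_mul_of_nonneg_left hIcc.2 hη.le

lemma scheme_update_mem_Icc {p h u L δ Δt : ℝ} (hp : p ∈ Set.Icc 0 L)
    (hh : h ∈ Set.Icc (-p) (L - p)) (hu : u ∈ Set.Icc 0 L) (hδ : 0 ≤ δ) (hΔt : 0 ≤ Δt)
    (hΔt' : Δt * (1 + δ) ≤ 1) :
    p + Δt * (h - δ * p + δ * u) ∈ Set.Icc 0 L := by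
  obtain ⟨hp₀, hpL⟩ := hp
  obtain ⟨hh₀, hhL⟩ := hh
  obtain ⟨hu₀, huL⟩ := hu
  constructor
  · nlinarith [mul_nonneg hΔt hδ, mul_nonneg (mul_nonneg hΔt hδ) hu₀]
  · nlinarith [mul_nonneg hΔt hδ, mul_le_mul_of_nonneg_left huL (mul_nonneg hΔt hδ)]

theorem discrete_hjb_bounds_general (I Nt Nx : ℕ) (q η L δ Δt Δx : ℝ)
    (hη : 0 < η) (hL : 0 < L) (hδ : 0 < δ)
    (hA2 : q ≠ 1 → ∃ g > 0, 1 - 2 * |1 - q| * η⁻¹ * L ≥ g)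
    (hNx : 0 < Nx) (hΔx : Δx = 1 / (Nx : ℝ)) (hΔt : 0 < Δt)
    (hΔt' : Δt ≤ 1 / (1 + δ))
    (U : Fin I → ℕ → Fin Nx → ℝ)
    (hU : ∀ (i : Fin I) (k : ℕ) (l : Fin Nx), k < Nt → 0 ≤ U i k l ∧ U i k l ≤ L)
    (Φ : Fin I → ℕ → Fin Nx → ℝ)
    (hterm : ∀ (i : Fin I) (l : Fin Nx), Φ i Nt l = 0)
    (hrec : ∀ (i : Fin I) (k : ℕ) (l : Fin Nx), k < Nt →
      Φ i k l = Φ i (k+1) l + Δt *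
        (η * tlog q (∑ m, texp q (η⁻¹ * (Φ i (k+1) m - Φ i (k+1) l)) * Δx)
          - δ * Φ i (k+1) l + δ * U i k l)) :
    ∀ (i : Fin I) (k : ℕ) (l : Fin Nx), k ≤ Nt → 0 ≤ Φ i k l ∧ Φ i k l ≤ L := by
  have hqL : |1 - q| * (η⁻¹ * L) < 1 := by
    by_cases hq : q = 1
    · simp [hq]
    · obtain ⟨g, hg, hA2⟩ := hA2 hq
      nlinarith [mul_nonneg (abs_nonneg (1 - q)) (mul_nonneg (inv_nonneg.2 hη.le) hL.le)]
  have hΔx₁ : ∑ _m : Fin Nx, Δx = 1 := by simp [hΔx, Nat.pos_iff_ne_zero.1 hNx]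
  have hΔt₁ : Δt * (1 + δ) ≤ 1 := (le_div_iff₀ (by linarith)).1 hΔt'
  intro i k l hk
  refine Nat.decreasingInduction (motive := fun k _ => ∀ l, Φ i k l ∈ Set.Icc 0 L)
    (fun k hk ih l => ?_) (fun l => by simp [hterm i l, hL.le]) hk l
  rw [hrec i k l hk]
  exact scheme_update_mem_Icc (ih l)
    (mul_tlog_sum_texp_mem_Icc hη hqL (fun _ => Δx) (Φ i (k + 1))
      (fun _ => by rw [hΔx]; positivity) hΔx₁ ih l)
    (hU i k l hk) hδ.le hΔt.le hΔt₁

/-- Proposition 3: under Assumption 2, with `0 ≤ U_{i,k,l} ≤ L` and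
`Δt ≤ 1/(1+δ)`, the values `Φ^{(i)}_{k,l}` produced by the backward finite difference
scheme (with terminal condition `Φ^{(i)}_{N_t,l} = 0`) satisfy `0 ≤ Φ^{(i)}_{k,l} ≤ L`
for all `i`, all `k ∈ {0,…,N_t}`, and all `l`. -/
theorem discrete_hjb_bounds (I Nt Nx : ℕ) (q η L δ Δt Δx : ℝ)
    (hq : 0 < q) (hη : 0 < η) (hL : 0 < L) (hδ : 0 < δ)
    (hA2 : q ≠ 1 → ∃ g > 0, 1 - 2 * |1 - q| * η⁻¹ * L ≥ g)
    (hNx : 0 < Nx) (hΔx : Δx = 1 / (Nx : ℝ)) (hΔt : 0 < Δt)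
    (hΔt' : Δt ≤ 1 / (1 + δ))
    (U : Fin I → ℕ → Fin Nx → ℝ)
    (hU : ∀ (i : Fin I) (k : ℕ) (l : Fin Nx), k < Nt → 0 ≤ U i k l ∧ U i k l ≤ L)
    (Φ : Fin I → ℕ → Fin Nx → ℝ)
    (hterm : ∀ (i : Fin I) (l : Fin Nx), Φ i Nt l = 0)
    (hrec : ∀ (i : Fin I) (k : ℕ) (l : Fin Nx), k < Nt →
      Φ i k l = Φ i (k+1) l + Δt *
        (η * tlog q (∑ m, texp q (η⁻¹ * (Φ i (k+1) m - Φ i (k+1) l)) * Δx)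
          - δ * Φ i (k+1) l + δ * U i k l)) :
    ∀ (i : Fin I) (k : ℕ) (l : Fin Nx), k ≤ Nt → 0 ≤ Φ i k l ∧ Φ i k l ≤ L :=
  discrete_hjb_bounds_general I Nt Nx q η L δ Δt Δx hη hL hδ hA2 hNx hΔx hΔt hΔt' U hU Φ hterm hrec

end
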